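/- Suppose (φ, ζ) is a pair of smooth real functions on ℝ × [a, b] such that ∂_x φ − ∂_u ζ = 0 and ∂_x ζ + ∂_u φ − ζ = 0, with φ vanishing on the boundary components ℝ × {a} and ℝ × {b}, and with φ, ζ and their first derivatives square-integrable on ℝ × [a, b]. Then φ ≡ 0 and ζ ≡ 0. -/

import Mathlib

open MeasureTheory

/-- Partial derivative in the `x`-direction. -/
noncomputable def Dx (f : ℝ × ℝ → ℝ) (p : ℝ × ℝ) : ℝ := fderiv ℝ f p (1, 0)

/-- Partial derivative in the `u`-direction. -/
noncomputable def Du (f : ℝ × ℝ → ℝ) (p : ℝ × ℝ) : ℝ := fderiv ℝ f p (0, 1)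

/-! With `E(x) = ∫_a^b (ζ² - φ²)(x, u) du`, the two equations turn `E'(x) = 2 ∫ (ζ ∂ₓζ - φ ∂ₓφ)`
into `2 ∫ ζ² - 2 [φ ζ]_a^b = 2 ∫_a^b ζ(x, u)² du ≥ 0`, the boundary term vanishing because `φ`
does. So `E` is monotone, and it is integrable over `ℝ` because `φ` and `ζ` are square-integrable;
a monotone integrable function on `ℝ` is zero. Hence `E' ≡ 0`, i.e. `ζ ≡ 0` on the strip; then
`∂ᵤφ = ζ - ∂ₓζ = 0` and `φ(x, a) = 0` force `φ ≡ 0`. -/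

open Set

section PartialDerivatives

variable {f : ℝ × ℝ → ℝ}

theorem hasDerivAt_Dx (hf : Differentiable ℝ f) (x u : ℝ) :
    HasDerivAt (fun t => f (t, u)) (Dx f (x, u)) x :=
  (hf (x, u)).hasFDerivAt.comp_hasDerivAt x ((hasDerivAt_id x).prodMk (hasDerivAt_const x u))

theorem hasDerivAt_Du (hf : Differentiable ℝ f) (x u : ℝ) :
    HasDerivAt (fun t => f (x, t)) (Du f (x, u)) u :=
  (hf (x, u)).hasFDerivAt.comp_hasDerivAt u ((hasDerivAt_const u x).prodMk (hasDerivAt_id u))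

theorem continuous_Dx (hf : ContDiff ℝ 1 f) : Continuous (Dx f) :=
  (hf.continuous_fderiv one_ne_zero).clm_apply continuous_const

theorem continuous_Du (hf : ContDiff ℝ 1 f) : Continuous (Du f) :=
  (hf.continuous_fderiv one_ne_zero).clm_apply continuous_const

theorem Dx_eq_zero_of_forall_eq_zero (hf : Differentiable ℝ f) {u : ℝ}
    (h : ∀ t, f (t, u) = 0) (x : ℝ) : Dx f (x, u) = 0 := by
  have hd := hasDerivAt_Dx hf x u
  rw [funext h] at hd
  exact hd.unique (hasDerivAt_const x 0)

theorem eqOn_Icc_of_Du_eq_zero (hf : Differentiable ℝ f) {x a b : ℝ}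
    (h : ∀ u ∈ Icc a b, Du f (x, u) = 0) : ∀ u ∈ Icc a b, f (x, u) = f (x, a) :=
  constant_of_has_deriv_right_zero
    (hf.continuous.comp (Continuous.prodMk_right x)).continuousOn
    fun u hu => h u (Ico_subset_Icc_self hu) ▸ (hasDerivAt_Du hf x u).hasDerivWithinAt

end PartialDerivatives

theorem hasDerivAt_intervalIntegral_of_continuous_deriv {F F' : ℝ × ℝ → ℝ}
    (hF : Continuous F) (hF' : Continuous F')
    (hderiv : ∀ x u, HasDerivAt (fun t => F (t, u)) (F' (x, u)) x) (a b x₀ : ℝ) :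
    HasDerivAt (fun x => ∫ u in a..b, F (x, u)) (∫ u in a..b, F' (x₀, u)) x₀ := by
  obtain ⟨C, hC⟩ := (isCompact_Icc.prod isCompact_uIcc).exists_bound_of_continuousOn
    (s := Icc (x₀ - 1) (x₀ + 1) ×ˢ uIcc a b) hF'.continuousOn
  refine (intervalIntegral.hasDerivAt_integral_of_dominated_loc_of_deriv_le (bound := fun _ => C)
    (Icc_mem_nhds (by linarith) (by linarith))
    (Filter.Eventually.of_forall fun x =>
      (hF.comp (Continuous.prodMk_right x)).aestronglyMeasurable)
    ((hF.comp (Continuous.prodMk_right x₀)).intervalIntegrable a b)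
    (hF'.comp (Continuous.prodMk_right x₀)).aestronglyMeasurable
    (Filter.Eventually.of_forall fun u hu x hx => hC (x, u) ⟨hx, uIoc_subset_uIcc hu⟩)
    intervalIntegrable_const
    (Filter.Eventually.of_forall fun u _ x _ => hderiv x u)).2

theorem MeasureTheory.IntegrableOn.intervalIntegral_prod_left {g : ℝ × ℝ → ℝ} {a b : ℝ}
    (hab : a ≤ b) (hg : IntegrableOn g (univ ×ˢ Icc a b)) :
    Integrable (fun x => ∫ u in a..b, g (x, u)) := by
  rw [IntegrableOn, Measure.volume_eq_prod, ← Measure.prod_restrict, Measure.restrict_univ] at hg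
  simpa only [intervalIntegral.integral_of_le hab, integral_Icc_eq_integral_Ioc]
    using hg.integral_prod_left

theorem Monotone.nonpos_of_integrable {f : ℝ → ℝ} (hm : Monotone f) (hi : Integrable f)
    (x : ℝ) : f x ≤ 0 := by
  by_contra! hpos
  have hconst : IntegrableOn (fun _ => f x) (Ici x) := by
    refine Integrable.mono' hi.integrableOn aestronglyMeasurable_const ?_
    filter_upwards [ae_restrict_mem measurableSet_Ici] with y hy
    rw [Real.norm_eq_abs, abs_of_pos hpos]
    exact hm hy
  simp [integrableOn_const_iff, hpos.ne'] at hconst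

theorem Monotone.eq_zero_of_integrable {f : ℝ → ℝ} (hm : Monotone f) (hi : Integrable f)
    (x : ℝ) : f x = 0 := by
  have hreflect : Monotone fun y => -f (-y) := fun y z hyz => neg_le_neg (hm (neg_le_neg hyz))
  have := hreflect.nonpos_of_integrable hi.comp_neg.neg (-x)
  simp only [neg_neg] at this
  exact le_antisymm (hm.nonpos_of_integrable hi x) (by linarith)

theorem eqOn_zero_of_intervalIntegral_eq_zero {f : ℝ → ℝ} {a b : ℝ} (hab : a < b)
    (hf : ContinuousOn f (Icc a b)) (hnn : ∀ u ∈ Icc a b, 0 ≤ f u)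
    (hzero : ∫ u in a..b, f u = 0) : ∀ u ∈ Icc a b, f u = 0 := by
  by_contra! ⟨c, hc, hne⟩
  have := intervalIntegral.integral_lt_integral_of_continuousOn_of_le_of_exists_lt hab
    continuousOn_const hf (fun u hu => hnn u (Ioc_subset_Icc_self hu))
    ⟨c, hc, (hnn c hc).lt_of_ne' hne⟩
  simp [hzero] at this

noncomputable def stripEnergy (a b : ℝ) (φ ζ : ℝ × ℝ → ℝ) (x : ℝ) : ℝ :=
  ∫ u in a..b, (ζ (x, u) ^ 2 - φ (x, u) ^ 2)

section StripSystem

variable {a b : ℝ} {φ ζ : ℝ × ℝ → ℝ}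

theorem integrable_stripEnergy (hab : a ≤ b) (hφ : Continuous φ) (hζ : Continuous ζ)
    (hL2φ : IntegrableOn (fun p => (φ p) ^ 2) (univ ×ˢ Icc a b))
    (hL2ζ : IntegrableOn (fun p => (ζ p) ^ 2) (univ ×ˢ Icc a b)) :
    Integrable (stripEnergy a b φ ζ) := by
  have hsplit : stripEnergy a b φ ζ =
      fun x => (∫ u in a..b, ζ (x, u) ^ 2) - ∫ u in a..b, φ (x, u) ^ 2 := by
    funext x
    exact intervalIntegral.integral_sub
      (((hζ.comp (Continuous.prodMk_right x)).pow 2).intervalIntegrable a b)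
      (((hφ.comp (Continuous.prodMk_right x)).pow 2).intervalIntegrable a b)
  rw [hsplit]
  exact (hL2ζ.intervalIntegral_prod_left hab).sub (hL2φ.intervalIntegral_prod_left hab)

variable (hφ : ContDiff ℝ 1 φ) (hζ : ContDiff ℝ 1 ζ)
  (heq1 : ∀ p : ℝ × ℝ, p.2 ∈ Icc a b → Dx φ p - Du ζ p = 0)
  (heq2 : ∀ p : ℝ × ℝ, p.2 ∈ Icc a b → Dx ζ p + Du φ p - ζ p = 0)
  (hbd : ∀ x : ℝ, φ (x, a) = 0 ∧ φ (x, b) = 0)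
include hφ hζ heq1 heq2 hbd

theorem intervalIntegral_mul_Dx_sub_mul_Dx (hab : a ≤ b) (x : ℝ) :
    ∫ u in a..b, (ζ (x, u) * Dx ζ (x, u) - φ (x, u) * Dx φ (x, u)) =
      ∫ u in a..b, ζ (x, u) ^ 2 := by
  have hφd := hφ.differentiable one_ne_zero
  have hζd := hζ.differentiable one_ne_zero
  have hDuφ := continuous_Du hφ
  have hDuζ := continuous_Du hζ
  have hcont : Continuous fun u => Du φ (x, u) * ζ (x, u) + φ (x, u) * Du ζ (x, u) := by
    fun_prop
  have hboundary : ∫ u in a..b, (Du φ (x, u) * ζ (x, u) + φ (x, u) * Du ζ (x, u)) = 0 := by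
    rw [intervalIntegral.integral_eq_sub_of_hasDerivAt
      (fun u _ => (hasDerivAt_Du hφd x u).fun_mul (hasDerivAt_Du hζd x u))
      (hcont.intervalIntegrable a b), (hbd x).1, (hbd x).2]
    ring
  calc ∫ u in a..b, (ζ (x, u) * Dx ζ (x, u) - φ (x, u) * Dx φ (x, u))
      = ∫ u in a..b, (ζ (x, u) ^ 2 - (Du φ (x, u) * ζ (x, u) + φ (x, u) * Du ζ (x, u))) := by
        refine intervalIntegral.integral_congr fun u hu => ?_
        rw [uIcc_of_le hab] at hu
        linear_combination ζ (x, u) * heq2 (x, u) hu - φ (x, u) * heq1 (x, u) hu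
    _ = ∫ u in a..b, ζ (x, u) ^ 2 := by
        rw [intervalIntegral.integral_sub
          ((by fun_prop : Continuous fun u => ζ (x, u) ^ 2).intervalIntegrable a b)
          (hcont.intervalIntegrable a b), hboundary, sub_zero]

theorem hasDerivAt_stripEnergy (hab : a ≤ b) (x : ℝ) :
    HasDerivAt (stripEnergy a b φ ζ) (2 * ∫ u in a..b, ζ (x, u) ^ 2) x := by
  have hφd := hφ.differentiable one_ne_zero
  have hζd := hζ.differentiable one_ne_zero
  have := hasDerivAt_intervalIntegral_of_continuous_deriv
    (F := fun p => ζ p ^ 2 - φ p ^ 2)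
    (F' := fun p => 2 * (ζ p * Dx ζ p - φ p * Dx φ p))
    (hζ.continuous.pow 2 |>.sub (hφ.continuous.pow 2))
    (continuous_const.mul ((hζ.continuous.mul (continuous_Dx hζ)).sub
      (hφ.continuous.mul (continuous_Dx hφ))))
    (fun x u => by
      refine (((hasDerivAt_Dx hζd x u).fun_pow 2).sub
        ((hasDerivAt_Dx hφd x u).fun_pow 2)).congr_deriv ?_
      ring) a b x
  rwa [intervalIntegral.integral_const_mul,
    intervalIntegral_mul_Dx_sub_mul_Dx hφ hζ heq1 heq2 hbd hab] at this

end StripSystem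

theorem strip_system_rigidity_general (a b : ℝ) (hab : a < b)
    (φ ζ : ℝ × ℝ → ℝ)
    (hφ : ContDiff ℝ (⊤ : ℕ∞) φ) (hζ : ContDiff ℝ (⊤ : ℕ∞) ζ)
    (heq1 : ∀ p : ℝ × ℝ, p.2 ∈ Set.Icc a b → Dx φ p - Du ζ p = 0)
    (heq2 : ∀ p : ℝ × ℝ, p.2 ∈ Set.Icc a b → Dx ζ p + Du φ p - ζ p = 0)
    (hbd : ∀ x : ℝ, φ (x, a) = 0 ∧ φ (x, b) = 0)
    (hL2φ : IntegrableOn (fun p => (φ p) ^ 2) (Set.univ ×ˢ Set.Icc a b))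
    (hL2ζ : IntegrableOn (fun p => (ζ p) ^ 2) (Set.univ ×ˢ Set.Icc a b)) :
    ∀ p : ℝ × ℝ, p.2 ∈ Set.Icc a b → φ p = 0 ∧ ζ p = 0 := by
  have hφ1 : ContDiff ℝ 1 φ := hφ.of_le (by exact_mod_cast le_top)
  have hζ1 : ContDiff ℝ 1 ζ := hζ.of_le (by exact_mod_cast le_top)
  have hE' := hasDerivAt_stripEnergy hφ1 hζ1 heq1 heq2 hbd hab.le
  have hmono : Monotone (stripEnergy a b φ ζ) :=
    monotone_of_deriv_nonneg (fun x => (hE' x).differentiableAt) fun x => (hE' x).deriv ▸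
      mul_nonneg zero_le_two (intervalIntegral.integral_nonneg hab.le fun u _ => sq_nonneg _)
  have hE0 := hmono.eq_zero_of_integrable
    (integrable_stripEnergy hab.le hφ.continuous hζ.continuous hL2φ hL2ζ)
  have hζ0 : ∀ x, ∀ u ∈ Icc a b, ζ (x, u) = 0 := by
    intro x
    have hint : ∫ u in a..b, ζ (x, u) ^ 2 = 0 := by
      have := (hE' x).unique (by rw [funext hE0]; exact hasDerivAt_const x 0)
      linarith
    intro u hu
    exact pow_eq_zero_iff two_ne_zero |>.1 (eqOn_zero_of_intervalIntegral_eq_zero hab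
      ((hζ.continuous.comp (Continuous.prodMk_right x)).pow 2).continuousOn
      (fun _ _ => sq_nonneg _) hint u hu)
  have hφ0 : ∀ x, ∀ u ∈ Icc a b, φ (x, u) = 0 := by
    intro x u hu
    rw [eqOn_Icc_of_Du_eq_zero (hφ1.differentiable one_ne_zero) (fun v hv => ?_) u hu, (hbd x).1]
    linarith [heq2 (x, v) hv, hζ0 x v hv,
      Dx_eq_zero_of_forall_eq_zero (hζ1.differentiable one_ne_zero) (fun t => hζ0 t v hv) x]
  exact fun p hp => ⟨hφ0 p.1 p.2 hp, hζ0 p.1 p.2 hp⟩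

/-- A smooth pair `(φ, ζ)` on the strip `ℝ × [a, b]` satisfying `∂ₓφ − ∂ᵤζ = 0` and
`∂ₓζ + ∂ᵤφ − ζ = 0`, with `φ` vanishing on both boundary lines and with `φ, ζ` and their
first derivatives square-integrable on the strip, must vanish identically. -/
theorem strip_system_rigidity (a b : ℝ) (hab : a < b)
    (φ ζ : ℝ × ℝ → ℝ)
    (hφ : ContDiff ℝ (⊤ : ℕ∞) φ) (hζ : ContDiff ℝ (⊤ : ℕ∞) ζ)
    (heq1 : ∀ p : ℝ × ℝ, p.2 ∈ Set.Icc a b → Dx φ p - Du ζ p = 0)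
    (heq2 : ∀ p : ℝ × ℝ, p.2 ∈ Set.Icc a b → Dx ζ p + Du φ p - ζ p = 0)
    (hbd : ∀ x : ℝ, φ (x, a) = 0 ∧ φ (x, b) = 0)
    (hL2φ : IntegrableOn (fun p => (φ p) ^ 2) (Set.univ ×ˢ Set.Icc a b))
    (hL2ζ : IntegrableOn (fun p => (ζ p) ^ 2) (Set.univ ×ˢ Set.Icc a b))
    (hL2dφ : IntegrableOn (fun p => ‖fderiv ℝ φ p‖ ^ 2) (Set.univ ×ˢ Set.Icc a b))
    (hL2dζ : IntegrableOn (fun p => ‖fderiv ℝ ζ p‖ ^ 2) (Set.univ ×ˢ Set.Icc a b)) :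
    ∀ p : ℝ × ℝ, p.2 ∈ Set.Icc a b → φ p = 0 ∧ ζ p = 0 :=
  strip_system_rigidity_general a b hab φ ζ hφ hζ heq1 heq2 hbd hL2φ hL2ζ
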